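/- arXiv:2004.02666 — 4 statements merged into one kernel-verified Lean document; each statement's English description precedes it below -/
import Mathlib

section
/- Every strong k-jagged partition is equal to the juxtaposition (concatenation, in increasing order of the index j) of its maximal blocks M_j over all positive integers j. -/
/-- A strong `k`-jagged partition: a nonempty integer list whose first element is positive
and such that `a i' - a i ≥ -k` for all pairs of indices `i < i'`. -/
def IsStrongJagged (k : ℕ) (l : List ℤ) : Prop :=
  l ≠ [] ∧ 0 < l.headI ∧
  ∀ i i' : Fin l.length, i < i' → l.get i' - l.get i ≥ -(k : ℤ)

/-- `b` is the maximal block `M_j` of the strong `k`-jagged partition `l`: if there is an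
element of `l` equal to `j` preceded only by elements smaller than `j`, then `b` is the
maximal contiguous subsequence of `l` starting there all of whose elements lie in
`{j, j-1, …, j-k}`; otherwise `b` is empty. -/
def IsMaxBlock (k : ℕ) (l : List ℤ) (j : ℤ) (b : List ℤ) : Prop :=
  (b = [] ∧ ¬ ∃ i : Fin l.length, l.get i = j ∧
      ∀ i' : Fin l.length, i' < i → l.get i' < j) ∨
  (∃ i : Fin l.length, l.get i = j ∧
      (∀ i' : Fin l.length, i' < i → l.get i' < j) ∧
      b = (l.drop i).takeWhile (fun x => decide (j - (k : ℤ) ≤ x ∧ x ≤ j)))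

/-! The first maximal block of a strong `k`-jagged partition `a :: t` is `M_a`, its longest
prefix with entries in `[a - k, a]`. The entry right after that prefix is `≥ a - k` by
strongness and lies outside the window, so it exceeds `a`: the remainder is again a strong
jagged partition (possibly empty) whose records all exceed every entry of `M_a`. Hence `M_j` is
empty for `j < a` and is the corresponding block of the remainder for `j > a`, and induction on
the length concatenates the blocks in increasing order of `j`. -/

section Record

variable {α : Type*} [Preorder α]

def SplitsAtRecord (l : List α) (j : α) (s : List α) : Prop :=
  ∃ p, l = p ++ j :: s ∧ ∀ x ∈ p, x < j

theorem exists_fin_iff_exists_splitsAtRecord {l : List α} {j : α} {f : List α → Prop} :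
    (∃ i : Fin l.length, l.get i = j ∧ (∀ i' < i, l.get i' < j) ∧ f (l.drop i)) ↔
      ∃ s, SplitsAtRecord l j s ∧ f (j :: s) := by
  constructor
  · rintro ⟨⟨i, hi⟩, rfl, hlt, hf⟩
    have hdrop : l.drop i = l.get ⟨i, hi⟩ :: l.drop (i + 1) := List.drop_eq_getElem_cons hi
    rw [Fin.val_mk, hdrop] at hf
    refine ⟨l.drop (i + 1), ⟨l.take i, ?_, ?_⟩, hf⟩
    · rw [← hdrop, List.take_append_drop]
    · intro x hx
      obtain ⟨i', hi', rfl⟩ := List.mem_take_iff_getElem.mp hx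
      exact hlt ⟨i', by omega⟩ (by simp only [Fin.mk_lt_mk]; omega)
  · rintro ⟨s, ⟨p, rfl, hp⟩, hf⟩
    refine ⟨⟨p.length, by simp⟩, by simp, fun ⟨i', hi'⟩ h => hp _ ?_, by simpa using hf⟩
    simp only [Fin.mk_lt_mk] at h
    simp [List.getElem_append_left h, List.getElem_mem]

theorem splitsAtRecord_append_iff {q r s : List α} {j : α} (hq : ∀ x ∈ q, x < j) :
    SplitsAtRecord (q ++ r) j s ↔ SplitsAtRecord r j s := by
  constructor
  · rintro ⟨p, hqr, hp⟩
    rcases List.append_eq_append_iff.mp hqr with ⟨p', rfl, rfl⟩ | ⟨q', rfl, hq'⟩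
    · exact ⟨p', rfl, fun x hx => hp x (List.mem_append_right q hx)⟩
    · cases q' with
      | nil => exact ⟨[], by simpa using hq'.symm, by simp⟩
      | cons y q' =>
        obtain ⟨rfl, -⟩ := List.cons_eq_cons.mp hq'
        exact absurd (hq j (by simp)) (lt_irrefl j)
  · rintro ⟨p, rfl, hp⟩
    refine ⟨q ++ p, by simp, fun x hx => ?_⟩
    rcases List.mem_append.mp hx with hx | hx
    exacts [hq x hx, hp x hx]

theorem SplitsAtRecord.head_le {l s : List α} {j : α} (h : SplitsAtRecord l j s) :
    ∀ a ∈ l.head?, a ≤ j := by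
  obtain ⟨p, rfl, hp⟩ := h
  cases p with
  | nil => simp
  | cons y p => simpa using (hp y (by simp)).le

theorem splitsAtRecord_cons_self (a : α) (t : List α) : SplitsAtRecord (a :: t) a t :=
  ⟨[], rfl, by simp⟩

end Record

section MaxBlock

def inBlockRange (k : ℕ) (j x : ℤ) : Bool :=
  decide (j - k ≤ x ∧ x ≤ j)

variable {k : ℕ} {l : List ℤ} {j : ℤ} {b : List ℤ}

@[simp]
theorem inBlockRange_eq_true {x : ℤ} : inBlockRange k j x = true ↔ j - k ≤ x ∧ x ≤ j :=
  decide_eq_true_iff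

theorem isMaxBlock_iff : IsMaxBlock k l j b ↔
    (b = [] ∧ ∀ s, ¬ SplitsAtRecord l j s) ∨
      ∃ s, SplitsAtRecord l j s ∧ b = (j :: s).takeWhile (inBlockRange k j) := by
  have hnone := exists_fin_iff_exists_splitsAtRecord (l := l) (j := j) (f := fun _ => True)
  simp only [and_true] at hnone
  rw [IsMaxBlock, hnone, not_exists]
  exact or_congr_right (exists_fin_iff_exists_splitsAtRecord
    (f := fun s => b = s.takeWhile (inBlockRange k j)))

theorem isMaxBlock_iff_eq_nil_of_lt_head (hj : ∀ a ∈ l.head?, j < a) :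
    IsMaxBlock k l j b ↔ b = [] := by
  have hno : ∀ s, ¬ SplitsAtRecord l j s := fun s hs => by
    cases l with
    | nil => obtain ⟨p, hp, -⟩ := hs; simp at hp
    | cons a t => exact absurd (hs.head_le a rfl) (not_le.mpr (hj a rfl))
  simp [isMaxBlock_iff, hno]

theorem isMaxBlock_append_iff {q : List ℤ} (hq : ∀ x ∈ q, x < j) :
    IsMaxBlock k (q ++ l) j b ↔ IsMaxBlock k l j b := by
  simp only [isMaxBlock_iff, splitsAtRecord_append_iff hq]

theorem isMaxBlock_cons_self (a : ℤ) (t : List ℤ) :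
    IsMaxBlock k (a :: t) a ((a :: t).takeWhile (inBlockRange k a)) :=
  isMaxBlock_iff.mpr (.inr ⟨t, splitsAtRecord_cons_self a t, rfl⟩)

end MaxBlock

section Flatten

variable {α : Type*} {B : ℕ → List α}

theorem flatten_map_range_eq_of_le {N M : ℕ} (hB : ∀ j, N < j → B j = []) (hNM : N ≤ M) :
    ((List.range M).map fun j => B (j + 1)).flatten =
      ((List.range N).map fun j => B (j + 1)).flatten := by
  induction M, hNM using Nat.le_induction with
  | base => rfl
  | succ M _ ih => simp [List.range_succ, ih, hB (M + 1) (by omega)]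

theorem flatten_map_range_update {a N : ℕ} (b : List α) (ha : 0 < a) (haN : a ≤ N)
    (hB : ∀ j, 0 < j → j ≤ a → B j = []) :
    ((List.range N).map fun j => Function.update B a b (j + 1)).flatten =
      b ++ ((List.range N).map fun j => B (j + 1)).flatten := by
  induction N with
  | zero => omega
  | succ N ih =>
    simp only [List.range_succ, List.map_append, List.flatten_append, List.map_cons,
      List.map_nil, List.flatten_cons, List.flatten_nil, List.append_nil]
    rcases haN.lt_or_eq with h | rfl
    · rw [ih (by omega), Function.update_of_ne (by omega), List.append_assoc]
    · have hvanish : ∀ C : ℕ → List α, (∀ j, 0 < j → j ≤ N → C j = []) →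
          ((List.range N).map fun j => C (j + 1)).flatten = [] := fun C hC => by
        simpa [List.flatten_eq_nil_iff] using fun j hj => hC (j + 1) (by omega) (by omega)
      rw [hvanish _ fun j hj hjN => by rw [Function.update_of_ne (by omega), hB j hj (by omega)],
        hvanish _ fun j hj hjN => hB j hj (by omega), Function.update_self, hB _ ha le_rfl]
      simp

end Flatten

def IsBlockDecomposition (k : ℕ) (l : List ℤ) (N : ℕ) (B : ℕ → List ℤ) : Prop :=
  (∀ j : ℕ, 0 < j → IsMaxBlock k l j (B j)) ∧ (∀ j, N < j → B j = []) ∧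
    ((List.range N).map fun j => B (j + 1)).flatten = l

theorem IsBlockDecomposition.cons {k N n : ℕ} {t : List ℤ} {B : ℕ → List ℤ} (hn : 0 < n)
    (hrest : IsBlockDecomposition k (((n : ℤ) :: t).dropWhile (inBlockRange k n)) N B)
    (hhead : ∀ c ∈ (((n : ℤ) :: t).dropWhile (inBlockRange k n)).head?, (n : ℤ) < c) :
    IsBlockDecomposition k (n :: t) (max N n)
      (Function.update B n (((n : ℤ) :: t).takeWhile (inBlockRange k n))) := by
  obtain ⟨hmax, hvanish, hflat⟩ := hrest
  have hBn : ∀ j, 0 < j → j ≤ n → B j = [] := fun j hj hjn =>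
    (isMaxBlock_iff_eq_nil_of_lt_head fun c hc => by have := hhead c hc; omega).mp (hmax j hj)
  refine ⟨fun j hj => ?_, fun j hj => ?_, ?_⟩
  · rcases lt_trichotomy j n with h | rfl | h
    · rw [Function.update_of_ne h.ne, hBn j hj h.le,
        isMaxBlock_iff_eq_nil_of_lt_head (by simpa using h)]
    · rw [Function.update_self]
      exact isMaxBlock_cons_self _ _
    · have hle : ∀ x ∈ ((n : ℤ) :: t).takeWhile (inBlockRange k n), x < j := fun x hx => by
        have := List.mem_takeWhile_imp hx
        rw [inBlockRange_eq_true] at this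
        omega
      rw [Function.update_of_ne h.ne', ← List.takeWhile_append_dropWhile (l := (n : ℤ) :: t),
        isMaxBlock_append_iff hle]
      exact hmax j hj
  · rw [Function.update_of_ne (by omega)]
    exact hvanish j (by omega)
  · rw [flatten_map_range_update _ hn (le_max_right _ _) hBn,
      flatten_map_range_eq_of_le hvanish (le_max_left _ _), hflat,
      List.takeWhile_append_dropWhile]

theorem exists_isBlockDecomposition (k : ℕ) (l : List ℤ)
    (hpw : l.Pairwise fun x y : ℤ => x - k ≤ y) (hpos : ∀ a ∈ l.head?, 0 < a) :
    ∃ N B, IsBlockDecomposition k l N B := by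
  match l with
  | [] =>
    exact ⟨0, fun _ => [], fun j _ => (isMaxBlock_iff_eq_nil_of_lt_head (by simp)).mpr rfl,
      fun _ _ => rfl, rfl⟩
  | a :: t =>
    obtain ⟨n, rfl⟩ : ∃ n : ℕ, (n : ℤ) = a := ⟨a.toNat, by simp at hpos; omega⟩
    set P := inBlockRange k n with hP
    have hPn : P n := by simp [hP]
    have hhead : ∀ c ∈ (((n : ℤ) :: t).dropWhile P).head?, (n : ℤ) < c := fun c hc => by
      have hPc : P c = false := by
        obtain ⟨rt, hrt⟩ := List.head?_eq_some_iff.mp hc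
        simpa [hrt] using List.head_dropWhile_not P (l := (n : ℤ) :: t) (by simp [hrt])
      have hnc : (n : ℤ) - k ≤ c := by
        rw [← List.takeWhile_append_dropWhile (p := P) (l := (n : ℤ) :: t)] at hpw
        exact (List.pairwise_append.mp hpw).2.2 n (by simp [hPn]) c (List.mem_of_mem_head? hc)
      rw [hP, Bool.eq_false_iff, ne_eq, inBlockRange_eq_true] at hPc
      omega
    obtain ⟨N, B, hB⟩ := exists_isBlockDecomposition k _
      (hpw.sublist (List.dropWhile_suffix P).sublist) (fun c hc => by have := hhead c hc; omega)
    exact ⟨_, _, hB.cons (by simpa using hpos) hhead⟩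
termination_by l.length
decreasing_by
  simp_wf
  exact (List.dropWhile_suffix _).length_le

/-- Every strong `k`-jagged partition is the juxtaposition, in increasing order of `j`, of
its maximal blocks `M_j` over all positive integers `j`. -/
theorem stmt_3 (k : ℕ) (l : List ℤ) (hl : IsStrongJagged k l) :
    ∃ (N : ℕ) (B : ℕ → List ℤ),
      (∀ j : ℕ, 0 < j → IsMaxBlock k l (j : ℤ) (B j)) ∧
      (∀ j : ℕ, N < j → B j = []) ∧
      ((List.range N).map (fun j => B (j + 1))).flatten = l := by
  obtain ⟨-, hpos, hstrong⟩ := hl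
  have hpw : l.Pairwise fun x y : ℤ => x - k ≤ y :=
    List.pairwise_iff_get.mpr fun i i' h => by have := hstrong i i' h; omega
  refine exists_isBlockDecomposition k l hpw fun a ha => ?_
  obtain ⟨t, rfl⟩ := List.head?_eq_some_iff.mp ha
  exact hpos
end

section
/- When s = 2 and t = 3, condition D2 is redundant: every partition into distinct parts satisfying conditions D0, D1, D3 automatically satisfies D2, i.e., every part d_i divisible by 3 satisfies d_i > 3(m − i), where m is the number of parts and parts are listed in decreasing order. -/
/-- Condition D3 for `s = 2`, `t = 3`: whenever two parts differ by less than `4`, either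
their difference is odd and both parts are divisible by `3`, or their difference is `2j`
and their sum is not congruent to `± 2j (mod 6)`. -/
def CondD3' (l : List ℕ) : Prop :=
  ∀ i r : ℕ, 0 < r → i + r < l.length →
    l.getD i 0 - l.getD (i + r) 0 < 4 →
      ((¬ 2 ∣ (l.getD i 0 - l.getD (i + r) 0)) ∧ 3 ∣ l.getD i 0 ∧ 3 ∣ l.getD (i + r) 0) ∨
      (∃ j : ℕ, l.getD i 0 - l.getD (i + r) 0 = 2 * j ∧
        ¬ 6 ∣ (l.getD i 0 + l.getD (i + r) 0 - 2 * j) ∧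
        ¬ 6 ∣ (l.getD i 0 + l.getD (i + r) 0 + 2 * j))

lemma aux_key (l : List ℕ) (hdec : l.Chain' (· > ·)) (h2 : ∀ d ∈ l, 2 ≤ d)
    (hD3 : CondD3' l) :
    ∀ n j (hj : j < l.length), l.length - 1 - j = n →
      3 * (l.length - 1 - j) + l[j] % 3 ≤ l[j] ∧
      (l[j] % 3 = 0 → 3 * (l.length - 1 - j) + 3 ≤ l[j]) := by
  intro n
  induction n with
  | zero =>
    intro j hj hn
    have h2' : 2 ≤ l[j] := h2 _ (List.getElem_mem hj)
    constructor <;> omega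
  | succ n ih =>
    intro j hj hn
    have hj1 : j + 1 < l.length := by omega
    have ihs := ih (j + 1) hj1 (by omega)
    have hg : l[j + 1] < l[j] := by
      have := List.isChain_iff_getElem.mp hdec j (by omega)
      simpa using this
    by_cases hlt : l[j] - l[j + 1] < 4
    · have hd3 := hD3 j 1 (by omega) (by omega)
      rw [List.getD_eq_getElem l 0 hj, List.getD_eq_getElem l 0 hj1] at hd3
      rcases hd3 hlt with ⟨h1, h2', h3⟩ | ⟨jj, e1, e2, e3⟩
      · constructor <;> omega
      · constructor <;> omega
    · constructor <;> omega

/-- For `s = 2`, `t = 3`, condition D2 is redundant: every partition into distinct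
positive parts (in decreasing order) satisfying D1 (every part lies in the semigroup
generated by `2` and `3`) and D3 automatically satisfies D2, i.e. every part `d_i`
divisible by `3` satisfies `d_i > 3·(m - i)` (1-indexed; with 0-indexing,
`d_i > 3·(m - 1 - i)`). -/
theorem stmt_7 (l : List ℕ) (hdec : l.Chain' (· > ·)) (hpos : ∀ d ∈ l, 0 < d)
    (hD1 : ∀ d ∈ l, ∃ h k : ℕ, d = h * 2 + k * 3) (hD3 : CondD3' l) :
    ∀ i : Fin l.length, 3 ∣ l.get i → 3 * (l.length - 1 - (i : ℕ)) < l.get i := by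
  intro i hdvd
  have h2 : ∀ d ∈ l, 2 ≤ d := by
    intro d hd
    obtain ⟨h, k, hk⟩ := hD1 d hd
    have := hpos d hd
    omega
  have := aux_key l hdec h2 hD3 (l.length - 1 - (i : ℕ)) i i.2 rfl
  have hget : l.get i = l[(i : ℕ)] := rfl
  rw [hget] at hdvd ⊢
  omega
end

section
/- For an integer t > 3, the following identity of formal power series in q holds: ∏_{n ≥ 1, n ≡ 0, t−1, t, t+1 (mod 2t)} (1 + q^n) = Σ_{a,b,c,d ≥ 0} q^{Q_t(a,b,c,d) + (t/2)b − c + d} / ((q^{2t}; q^{2t})_a (q^t; q^t)_b (q^t; q^t)_c (q^t; q^t)_d), where Q_t(a,b,c,d) = 2ta² + (t/2)b² + tc² + td² + 2tab + 2tac + 2tad + tbc + tbd + tcd. -/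
/-!
Write `Q = q^t`. Summing over `b` first, Euler's identity
`∑_b z^b Q^(b(b-1)/2) / (Q;Q)_b = (-z;Q)_∞` with `z = Q^(2a+c+d+1)` turns the right-hand side
into `(-Q;Q)_∞` times a triple sum over `a, c, d` carrying the extra factor `1/(-Q;Q)_(2a+c+d)`.
In the variables `u = a + c`, `v = a + d`, `w = a` the finite identity
`∑_w Q^((u-w)(v-w)) / ((Q²;Q²)_w (Q;Q)_(u-w) (Q;Q)_(v-w))
  = (-Q;Q)_(u+v) / ((Q²;Q²)_u (Q²;Q²)_v)`,
proved by a telescoping recursion in `v`, splits the triple sum into two Euler sums in base `Q²`,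
which are `(-q^(t-1);q^(2t))_∞` and `(-q^(t+1);q^(2t))_∞`. Together with `(-q^t;q^t)_∞` these
are the factors `1 + q^m` over the residues `0, t-1, t, t+1` modulo `2t`.

Everything is proved modulo an ideal containing the relevant powers (in the end `(X^(n+1))`),
where all infinite sums and products may be truncated.
-/

open PowerSeries Finset

/-- The exponent `Q_t(a,b,c,d) + (t/2)·b + d - c`, where
`Q_t(a,b,c,d) = 2ta² + (t/2)b² + tc² + td² + 2tab + 2tac + 2tad + tbc + tbd + tcd`
(so `(t/2)b² + (t/2)b = t·b(b+1)/2` is an integer). -/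
def capExp (t a b c d : ℕ) : ℕ :=
  2 * t * a ^ 2 + t * (b * (b + 1) / 2) + t * c ^ 2 + t * d ^ 2 +
    2 * t * a * b + 2 * t * a * c + 2 * t * a * d + t * b * c + t * b * d + t * c * d
    + d - c

section QPochhammer

variable {R : Type*} [CommRing R]

def qPoch (Q : R) (k : ℕ) : R := ∏ i ∈ range k, (1 - Q ^ (i + 1))

def qPochNeg (Q : R) (k : ℕ) : R := ∏ i ∈ range k, (1 + Q ^ (i + 1))

theorem qPoch_zero (Q : R) : qPoch Q 0 = 1 := prod_range_zero _

theorem qPoch_succ (Q : R) (k : ℕ) : qPoch Q (k + 1) = qPoch Q k * (1 - Q ^ (k + 1)) :=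
  prod_range_succ _ _

theorem qPochNeg_succ (Q : R) (k : ℕ) :
    qPochNeg Q (k + 1) = qPochNeg Q k * (1 + Q ^ (k + 1)) :=
  prod_range_succ _ _

theorem qPochNeg_add (Q : R) (m k : ℕ) :
    qPochNeg Q (m + k) = qPochNeg Q m * ∏ i ∈ range k, (1 + Q ^ (m + i + 1)) :=
  prod_range_add _ _ _

theorem qPoch_sq (Q : R) (k : ℕ) : qPoch (Q ^ 2) k = qPoch Q k * qPochNeg Q k := by
  rw [qPoch, qPoch, qPochNeg, ← prod_mul_distrib]
  refine prod_congr rfl fun i _ => ?_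
  ring

theorem qPoch_X_pow (s k : ℕ) :
    qPoch ((X : R⟦X⟧) ^ s) k = ∏ i ∈ range k, (1 - X ^ (s * (i + 1))) := by
  simp only [qPoch, pow_mul]

theorem mk_qPochNeg_add (I : Ideal R) {Q : R} {n : ℕ} (hQn : Q ^ n ∈ I) (k : ℕ) :
    Ideal.Quotient.mk I (qPochNeg Q (n + k)) = Ideal.Quotient.mk I (qPochNeg Q n) := by
  rw [qPochNeg_add, map_mul, map_prod]
  conv_rhs => rw [← mul_one (Ideal.Quotient.mk I _)]
  congr 1
  refine prod_eq_one fun i _ => ?_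
  rw [map_add, map_one, Ideal.Quotient.eq_zero_iff_mem.mpr (I.pow_mem_of_pow_mem hQn (by omega)),
    add_zero]

end QPochhammer

section Inverses

variable {K : Type*} [Field K] {Q : K⟦X⟧}

theorem constantCoeff_qPochNeg (hQ : constantCoeff Q = 0) (k : ℕ) :
    constantCoeff (qPochNeg Q k) = 1 := by
  simp [qPochNeg, map_prod, hQ]

theorem qPoch_succ_inv_mul (hQ : constantCoeff Q = 0) (k : ℕ) :
    (qPoch Q (k + 1))⁻¹ * (1 - Q ^ (k + 1)) = (qPoch Q k)⁻¹ := by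
  rw [qPoch_succ, PowerSeries.mul_inv_rev, mul_right_comm,
    PowerSeries.inv_mul_cancel _ (by simp [hQ]), one_mul]

theorem qPochNeg_mul_inv (hQ : constantCoeff Q = 0) (k : ℕ) :
    qPochNeg Q k * (qPochNeg Q k)⁻¹ = 1 :=
  PowerSeries.mul_inv_cancel _ (by simp [constantCoeff_qPochNeg hQ])

end Inverses

section Euler

variable {K : Type*} [Field K]

noncomputable def eulerSum (z Q : K⟦X⟧) (B : ℕ) : K⟦X⟧ :=
  ∑ b ∈ range B, z ^ b * Q ^ b.choose 2 * (qPoch Q b)⁻¹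

variable {Q : K⟦X⟧}

theorem eulerSum_succ (hQ : constantCoeff Q = 0) (z : K⟦X⟧) (B : ℕ) :
    eulerSum z Q (B + 1) = eulerSum (z * Q) Q (B + 1) + z * eulerSum (z * Q) Q B := by
  have hterm : ∀ b, z ^ (b + 1) * Q ^ (b + 1).choose 2 * (qPoch Q (b + 1))⁻¹ =
      (z * Q) ^ (b + 1) * Q ^ (b + 1).choose 2 * (qPoch Q (b + 1))⁻¹ +
        z * ((z * Q) ^ b * Q ^ b.choose 2 * (qPoch Q b)⁻¹) := by
    intro b
    rw [← qPoch_succ_inv_mul hQ b, Nat.choose_succ_succ', Nat.choose_one_right]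
    ring
  simp only [eulerSum, sum_range_succ' _ B, hterm, sum_add_distrib, mul_sum]
  simp only [pow_zero, Nat.choose_zero_succ, qPoch_zero, inv_one]
  ring

variable (I : Ideal K⟦X⟧) {z : K⟦X⟧}

theorem mk_eulerSum_of_mem (hz : z ∈ I) (B : ℕ) :
    Ideal.Quotient.mk I (eulerSum z Q (B + 1)) = 1 := by
  rw [eulerSum, sum_range_succ', map_add, map_sum]
  simp only [pow_zero, Nat.choose_zero_succ, qPoch_zero, inv_one, mul_one, map_one]
  rw [sum_eq_zero fun b _ => ?_, zero_add]
  rw [Ideal.Quotient.eq_zero_iff_mem, pow_succ', mul_assoc, mul_assoc]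
  exact I.mul_mem_right _ hz

theorem mk_prod_one_add_eq_eulerSum (hQ : constantCoeff Q = 0) {J B : ℕ} (hJ : z * Q ^ J ∈ I)
    (hB : z ^ B ∈ I) :
    Ideal.Quotient.mk I (∏ j ∈ range J, (1 + z * Q ^ j)) =
      Ideal.Quotient.mk I (eulerSum z Q B) := by
  obtain _ | B := B
  · rw [Ideal.Quotient.eq]
    simpa using I.mul_mem_left (_ - _) hB
  induction J generalizing z with
  | zero => rw [prod_range_zero, map_one, mk_eulerSum_of_mem I (by simpa using hJ)]
  | succ J ih =>
    have hprod : ∏ j ∈ range (J + 1), (1 + z * Q ^ j) =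
        (1 + z) * ∏ j ∈ range J, (1 + z * Q * Q ^ j) := by
      rw [prod_range_succ', pow_zero, mul_one, mul_comm]
      simp only [pow_succ', mul_assoc]
    have hdiff : (1 + z) * eulerSum (z * Q) Q (B + 1) - eulerSum z Q (B + 1) =
        z ^ (B + 1) * (Q ^ B * Q ^ B.choose 2 * (qPoch Q B)⁻¹) := by
      rw [eulerSum_succ hQ z B]
      simp only [eulerSum, sum_range_succ]
      ring
    rw [hprod, map_mul, ih (by rwa [mul_assoc, ← pow_succ'])
      (by rw [mul_pow]; exact I.mul_mem_right _ hB), ← map_mul, Ideal.Quotient.eq, hdiff]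
    exact I.mul_mem_right _ hB

theorem mk_eulerSum_pow_succ (hQ : constantCoeff Q = 0) {n : ℕ} (hQn : Q ^ n ∈ I) (k : ℕ) :
    Ideal.Quotient.mk I (eulerSum (Q ^ (k + 1)) Q n) =
      Ideal.Quotient.mk I ((qPochNeg Q k)⁻¹ * qPochNeg Q n) := by
  have hprod : ∏ j ∈ range n, (1 + Q ^ (k + 1) * Q ^ j) =
      (qPochNeg Q k)⁻¹ * qPochNeg Q (k + n) := by
    rw [qPochNeg_add, ← mul_assoc, mul_comm _ (qPochNeg Q k), qPochNeg_mul_inv hQ, one_mul]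
    refine prod_congr rfl fun j _ => ?_
    ring
  rw [← mk_prod_one_add_eq_eulerSum I hQ (I.mul_mem_left _ hQn)
      (by rw [← pow_mul]; exact I.pow_mem_of_pow_mem hQn (Nat.le_mul_of_pos_left n k.succ_pos)),
    hprod, map_mul, map_mul, add_comm, mk_qPochNeg_add I hQn]

end Euler

section CrossTerm

variable {K : Type*} [Field K] {Q : K⟦X⟧}

variable (Q) in
noncomputable def crossTerm (u v w : ℕ) : K⟦X⟧ :=
  Q ^ ((u - w) * (v - w)) * (qPoch (Q ^ 2) w)⁻¹ * (qPoch Q (u - w))⁻¹ * (qPoch Q (v - w))⁻¹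

theorem crossTerm_comm (u v w : ℕ) : crossTerm Q u v w = crossTerm Q v u w := by
  rw [crossTerm, crossTerm, mul_comm (u - w)]
  ring

theorem crossTerm_step_zero (hQ : constantCoeff Q = 0) (e v : ℕ) :
    crossTerm Q (e + 1) (v + 1) 0 * (1 - (Q ^ 2) ^ (v + 1)) -
        crossTerm Q (e + 1) v 0 * (1 + Q ^ (e + 1 + v + 1)) = - (Q ^ v * crossTerm Q e v 0) := by
  simp only [crossTerm, Nat.sub_zero, qPoch_zero, inv_one, mul_one]
  rw [← qPoch_succ_inv_mul hQ e, ← qPoch_succ_inv_mul hQ v]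
  ring

theorem crossTerm_step_succ (hQ : constantCoeff Q = 0) {e v w : ℕ} (hwv : w < v) (hve : v ≤ e) :
    crossTerm Q (e + 1) (v + 1) (w + 1) * (1 - (Q ^ 2) ^ (v + 1)) -
        crossTerm Q (e + 1) v (w + 1) * (1 + Q ^ (e + 1 + v + 1)) =
      Q ^ (v - w) * crossTerm Q e v w - Q ^ (v - (w + 1)) * crossTerm Q e v (w + 1) := by
  obtain ⟨d, rfl⟩ := Nat.exists_eq_add_of_lt hwv
  obtain ⟨c, rfl⟩ := Nat.exists_eq_add_of_le hve
  have h1 : w + d + 1 + c + 1 - (w + 1) = c + d + 1 := by omega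
  have h2 : w + d + 1 + 1 - (w + 1) = d + 1 := by omega
  have h3 : w + d + 1 - (w + 1) = d := by omega
  have h4 : w + d + 1 + c - w = c + d + 1 := by omega
  have h5 : w + d + 1 - w = d + 1 := by omega
  have h6 : w + d + 1 + c - (w + 1) = c + d := by omega
  simp only [crossTerm, h1, h2, h3, h4, h5, h6]
  rw [← qPoch_succ_inv_mul hQ d, ← qPoch_succ_inv_mul hQ (c + d),
    ← qPoch_succ_inv_mul (by simp [hQ]) w]
  ring

theorem crossTerm_step_top (hQ : constantCoeff Q = 0) {e v : ℕ} (hve : v ≤ e) :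
    crossTerm Q (e + 1) (v + 1) (v + 1) * (1 - (Q ^ 2) ^ (v + 1)) = crossTerm Q e v v := by
  have h : e + 1 - (v + 1) = e - v := by omega
  simp only [crossTerm, h, Nat.sub_self, mul_zero, pow_zero, one_mul]
  rw [← qPoch_succ_inv_mul (by simp [hQ]) v]
  ring

theorem sum_crossTerm_step (hQ : constantCoeff Q = 0) {e v : ℕ} (hve : v ≤ e) :
    (∑ w ∈ range (v + 2), crossTerm Q (e + 1) (v + 1) w) * (1 - (Q ^ 2) ^ (v + 1)) =
      (∑ w ∈ range (v + 1), crossTerm Q (e + 1) v w) * (1 + Q ^ (e + 1 + v + 1)) := by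
  set f : ℕ → K⟦X⟧ := fun w => Q ^ (v - w) * crossTerm Q e v w
  have hsucc : ∀ w ∈ range v, crossTerm Q (e + 1) (v + 1) (w + 1) * (1 - (Q ^ 2) ^ (v + 1)) -
      crossTerm Q (e + 1) v (w + 1) * (1 + Q ^ (e + 1 + v + 1)) = f w - f (w + 1) :=
    fun w hw => crossTerm_step_succ hQ (mem_range.mp hw) hve
  have htop : crossTerm Q (e + 1) (v + 1) (v + 1) * (1 - (Q ^ 2) ^ (v + 1)) = f v := by
    simp only [f, Nat.sub_self, pow_zero, one_mul, crossTerm_step_top hQ hve]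
  rw [← sub_eq_zero, sum_mul, sum_mul, sum_range_succ _ (v + 1), sum_range_succ', sum_range_succ',
    htop]
  have hzero := crossTerm_step_zero hQ e v
  calc _ = ∑ w ∈ range v, (crossTerm Q (e + 1) (v + 1) (w + 1) * (1 - (Q ^ 2) ^ (v + 1)) -
          crossTerm Q (e + 1) v (w + 1) * (1 + Q ^ (e + 1 + v + 1))) +
        (crossTerm Q (e + 1) (v + 1) 0 * (1 - (Q ^ 2) ^ (v + 1)) -
          crossTerm Q (e + 1) v 0 * (1 + Q ^ (e + 1 + v + 1))) + f v := by
        rw [sum_sub_distrib]; ring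
    _ = 0 := by
        rw [sum_congr rfl hsucc, sum_range_sub', hzero]
        simp only [f, Nat.sub_zero]
        ring

theorem sum_crossTerm_of_le (hQ : constantCoeff Q = 0) {u v : ℕ} (hvu : v ≤ u) :
    ∑ w ∈ range (v + 1), crossTerm Q u v w =
      qPochNeg Q (u + v) * (qPoch (Q ^ 2) u)⁻¹ * (qPoch (Q ^ 2) v)⁻¹ := by
  induction v with
  | zero =>
    simp only [zero_add, sum_range_one, crossTerm, Nat.sub_zero, mul_zero, pow_zero, qPoch_zero,
      inv_one, mul_one, one_mul, add_zero]
    rw [qPoch_sq, PowerSeries.mul_inv_rev, ← mul_assoc, qPochNeg_mul_inv hQ, one_mul]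
  | succ v ih =>
    obtain ⟨e, rfl⟩ := Nat.exists_eq_add_of_lt hvu
    have hX : (1 - (Q ^ 2) ^ (v + 1)) ≠ 0 := fun h => by
      simpa [hQ] using congrArg constantCoeff h
    apply mul_right_cancel₀ hX
    rw [sum_crossTerm_step hQ (by omega), ih (by omega), ← add_assoc, qPochNeg_succ,
      mul_assoc _ _ (1 - _), qPoch_succ_inv_mul (by simp [hQ])]
    ring

theorem sum_crossTerm (hQ : constantCoeff Q = 0) (u v : ℕ) :
    ∑ w ∈ range (min u v + 1), crossTerm Q u v w =
      qPochNeg Q (u + v) * (qPoch (Q ^ 2) u)⁻¹ * (qPoch (Q ^ 2) v)⁻¹ := by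
  rcases le_total v u with h | h
  · rw [min_eq_right h, sum_crossTerm_of_le hQ h]
  · rw [min_eq_left h, sum_congr rfl fun w _ => crossTerm_comm u v w, sum_crossTerm_of_le hQ h,
      add_comm]
    ring

theorem inv_qPochNeg_mul_sum_crossTerm (hQ : constantCoeff Q = 0) (u v : ℕ) :
    (qPochNeg Q (u + v))⁻¹ * ∑ w ∈ range (min u v + 1), crossTerm Q u v w =
      (qPoch (Q ^ 2) u)⁻¹ * (qPoch (Q ^ 2) v)⁻¹ := by
  rw [sum_crossTerm hQ, mul_assoc, ← mul_assoc, mul_comm _ (qPochNeg Q _), qPochNeg_mul_inv hQ,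
    one_mul]

end CrossTerm

theorem sum_range_cube_eq_sum_range_min {M : Type*} [AddCommMonoid M] {n : ℕ}
    (g : ℕ → ℕ → ℕ → M) (hg : ∀ u v w, n ≤ u ∨ n ≤ v → g u v w = 0) :
    ∑ a ∈ range n, ∑ c ∈ range n, ∑ d ∈ range n, g (a + c) (a + d) a =
      ∑ u ∈ range n, ∑ v ∈ range n, ∑ w ∈ range (min u v + 1), g u v w := by
  have hcube : ∀ a ∈ range n, ∑ c ∈ range n, ∑ d ∈ range n, g (a + c) (a + d) a =
      ∑ c ∈ range (n - a), ∑ d ∈ range (n - a), g (a + c) (a + d) a := by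
    intro a _
    rw [← sum_subset (range_subset_range.2 (Nat.sub_le n a)) fun c _ hc =>
      sum_eq_zero fun d _ => hg _ _ _ (Or.inl (by simp at hc; omega))]
    refine sum_congr rfl fun c _ => (sum_subset (range_subset_range.2 (Nat.sub_le n a))
      fun d _ hd => hg _ _ _ (Or.inr (by simp at hd; omega))).symm
  rw [sum_congr rfl hcube]
  calc _ = ∑ w ∈ range n, ∑ u ∈ Ico w n, ∑ v ∈ Ico w n, g u v w := by
        simp only [sum_Ico_eq_sum_range]
    _ = ∑ u ∈ range n, ∑ w ∈ range (u + 1), ∑ v ∈ Ico w n, g u v w :=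
        (sum_comm' fun w u => by simp only [mem_range, mem_Ico]; omega).symm
    _ = _ := sum_congr rfl fun u _ =>
        (sum_comm' fun v w => by simp only [mem_range, mem_Ico]; omega).symm

section Capparelli

variable {K : Type*} [Field K]

-- The sum of the theorem is the case `z₁ = X^(t-1)`, `z₂ = X^(t+1)`, `Q = X^t`.
noncomputable def capparelliSum (z₁ z₂ Q : K⟦X⟧) (n : ℕ) : K⟦X⟧ :=
  ∑ a ∈ range n, ∑ b ∈ range n, ∑ c ∈ range n, ∑ d ∈ range n,
    z₁ ^ (a + c) * z₂ ^ (a + d) *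
      Q ^ (2 * (a + c).choose 2 + 2 * (a + d).choose 2 + c * d + (2 * a + c + d + 1) * b +
        b.choose 2) *
      (qPoch (Q ^ 2) a)⁻¹ * (qPoch Q b)⁻¹ * (qPoch Q c)⁻¹ * (qPoch Q d)⁻¹

theorem capparelliSum_eq_sum_mul_eulerSum (z₁ z₂ Q : K⟦X⟧) (n : ℕ) :
    capparelliSum z₁ z₂ Q n = ∑ a ∈ range n, ∑ c ∈ range n, ∑ d ∈ range n,
      z₁ ^ (a + c) * z₂ ^ (a + d) * (Q ^ 2) ^ ((a + c).choose 2 + (a + d).choose 2) *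
        Q ^ (c * d) * (qPoch (Q ^ 2) a)⁻¹ * (qPoch Q c)⁻¹ * (qPoch Q d)⁻¹ *
        eulerSum (Q ^ (2 * a + c + d + 1)) Q n := by
  refine sum_congr rfl fun a _ => ?_
  rw [sum_comm]
  refine sum_congr rfl fun c _ => ?_
  rw [sum_comm]
  refine sum_congr rfl fun d _ => ?_
  rw [eulerSum, mul_sum]
  refine sum_congr rfl fun b _ => ?_
  ring

variable (I : Ideal K⟦X⟧) {z₁ z₂ Q : K⟦X⟧} {n : ℕ}

theorem mk_capparelliSum (hQ : constantCoeff Q = 0) (hQn : Q ^ n ∈ I) (h₁ : z₁ ^ n ∈ I)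
    (h₂ : z₂ ^ n ∈ I) :
    Ideal.Quotient.mk I (capparelliSum z₁ z₂ Q n) = Ideal.Quotient.mk I
      (qPochNeg Q n * (∏ j ∈ range n, (1 + z₁ * (Q ^ 2) ^ j)) *
        ∏ j ∈ range n, (1 + z₂ * (Q ^ 2) ^ j)) := by
  have hQ2 : constantCoeff (Q ^ 2) = 0 := by simp [hQ]
  have hQ2n : (Q ^ 2) ^ n ∈ I := by
    rw [← pow_mul]; exact I.pow_mem_of_pow_mem hQn (Nat.le_mul_of_pos_left n two_pos)
  set g : ℕ → ℕ → ℕ → K⟦X⟧ := fun u v w =>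
    z₁ ^ u * z₂ ^ v * (Q ^ 2) ^ (u.choose 2 + v.choose 2) *
      ((qPochNeg Q (u + v))⁻¹ * crossTerm Q u v w)
  have hg : ∀ u v w, n ≤ u ∨ n ≤ v → Ideal.Quotient.mk I (g u v w) = 0 := by
    intro u v w huv
    have hz : z₁ ^ u * z₂ ^ v ∈ I := huv.elim
      (fun hu => I.mul_mem_right _ (I.pow_mem_of_pow_mem h₁ hu))
      (fun hv => I.mul_mem_left _ (I.pow_mem_of_pow_mem h₂ hv))
    exact Ideal.Quotient.eq_zero_iff_mem.mpr (I.mul_mem_right _ (I.mul_mem_right _ hz))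
  have hsum_w : ∀ u v, ∑ w ∈ range (min u v + 1), g u v w =
      (z₁ ^ u * (Q ^ 2) ^ u.choose 2 * (qPoch (Q ^ 2) u)⁻¹) *
        (z₂ ^ v * (Q ^ 2) ^ v.choose 2 * (qPoch (Q ^ 2) v)⁻¹) := by
    intro u v
    rw [← mul_sum, ← mul_sum, inv_qPochNeg_mul_sum_crossTerm hQ, pow_add]
    ring
  calc Ideal.Quotient.mk I (capparelliSum z₁ z₂ Q n)
      = Ideal.Quotient.mk I (qPochNeg Q n) *
          ∑ a ∈ range n, ∑ c ∈ range n, ∑ d ∈ range n,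
            Ideal.Quotient.mk I (g (a + c) (a + d) a) := by
        rw [capparelliSum_eq_sum_mul_eulerSum]
        simp only [map_sum, mul_sum, map_mul]
        refine sum_congr rfl fun a _ => sum_congr rfl fun c _ => sum_congr rfl fun d _ => ?_
        rw [show 2 * a + c + d + 1 = (a + c + (a + d)) + 1 by ring, mk_eulerSum_pow_succ I hQ hQn]
        simp only [g, crossTerm, Nat.add_sub_cancel_left, map_mul]
        ring
    _ = Ideal.Quotient.mk I (qPochNeg Q n) * Ideal.Quotient.mk I
          (eulerSum z₁ (Q ^ 2) n * eulerSum z₂ (Q ^ 2) n) := by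
        rw [sum_range_cube_eq_sum_range_min _ hg, eulerSum, eulerSum, sum_mul_sum, map_sum]
        simp only [← map_sum, hsum_w]
    _ = _ := by
        rw [map_mul, ← mk_prod_one_add_eq_eulerSum I hQ2 (I.mul_mem_left _ hQ2n) h₁,
          ← mk_prod_one_add_eq_eulerSum I hQ2 (I.mul_mem_left _ hQ2n) h₂, map_mul, map_mul,
          mul_assoc]

end Capparelli

section XAdic

variable {R : Type*} [CommRing R] {n : ℕ}

theorem X_pow_mem_span_X_pow {m e : ℕ} (h : m ≤ e) :
    (X : R⟦X⟧) ^ e ∈ Ideal.span {X ^ m} :=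
  Ideal.mem_span_singleton.mpr (pow_dvd_pow X h)

theorem coeff_eq_of_mk_span_X_pow_eq {f g : R⟦X⟧}
    (h : Ideal.Quotient.mk (Ideal.span {X ^ (n + 1)}) f =
      Ideal.Quotient.mk (Ideal.span {X ^ (n + 1)}) g) :
    coeff n f = coeff n g := by
  rw [Ideal.Quotient.eq, Ideal.mem_span_singleton, X_pow_dvd_iff] at h
  simpa [sub_eq_zero] using h n n.lt_succ_self

theorem mk_prod_one_add_X_pow_congr {A B : Finset ℕ} (h : ∀ m ≤ n, m ∈ A ↔ m ∈ B) :
    Ideal.Quotient.mk (Ideal.span {X ^ (n + 1)}) (∏ m ∈ A, (1 + (X : R⟦X⟧) ^ m)) =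
      Ideal.Quotient.mk (Ideal.span {X ^ (n + 1)}) (∏ m ∈ B, (1 + X ^ m)) := by
  have hlow : ∀ C : Finset ℕ,
      Ideal.Quotient.mk (Ideal.span {X ^ (n + 1)}) (∏ m ∈ C, (1 + (X : R⟦X⟧) ^ m)) =
        ∏ m ∈ C with m ≤ n, Ideal.Quotient.mk (Ideal.span {X ^ (n + 1)}) (1 + X ^ m) := by
    intro C
    rw [map_prod, prod_filter_of_ne fun m _ hm => ?_]
    contrapose! hm
    rw [map_add, map_one, Ideal.Quotient.eq_zero_iff_mem.mpr (X_pow_mem_span_X_pow hm), add_zero]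
  rw [hlow, hlow]
  congr 1
  ext m
  simp only [mem_filter]
  exact and_congr_left (h m)

theorem mk_prod_one_add_progression (p : ℕ → Prop) [DecidablePred p] {r s J : ℕ} (hr : 0 < r)
    (hs : 0 < s) (hJ : n < r + s * J) (hp : ∀ m, 0 < m → (p m ↔ ∃ j, m = r + s * j)) :
    Ideal.Quotient.mk (Ideal.span {X ^ (n + 1)})
        (∏ j ∈ range J, (1 + (X : R⟦X⟧) ^ r * (X ^ s) ^ j)) =
      Ideal.Quotient.mk (Ideal.span {X ^ (n + 1)}) (∏ m ∈ Icc 1 n with p m, (1 + X ^ m)) := by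
  have hinj : Set.InjOn (fun j => r + s * j) (range J) := fun i _ j _ h => by
    simpa [hs.ne'] using h
  rw [show ∏ j ∈ range J, (1 + (X : R⟦X⟧) ^ r * (X ^ s) ^ j) =
      ∏ m ∈ (range J).image (fun j => r + s * j), (1 + X ^ m) by
    rw [prod_image hinj]; simp only [pow_add, pow_mul]]
  refine mk_prod_one_add_X_pow_congr fun m hm => ?_
  simp only [mem_image, mem_range, mem_filter, mem_Icc]
  constructor
  · rintro ⟨j, -, rfl⟩
    exact ⟨⟨by omega, hm⟩, (hp _ (by omega)).2 ⟨j, rfl⟩⟩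
  · rintro ⟨⟨hm1, -⟩, hpm⟩
    obtain ⟨j, rfl⟩ := (hp m hm1).1 hpm
    exact ⟨j, Nat.lt_of_mul_lt_mul_left (a := s) (by omega), rfl⟩

end XAdic

theorem mod_eq_iff_exists_eq_add_mul {m r s : ℕ} (hrs : r < s) :
    m % s = r ↔ ∃ j, m = r + s * j :=
  ⟨fun h => ⟨m / s, h ▸ (Nat.mod_add_div m s).symm⟩,
    fun ⟨j, hj⟩ => by rw [hj, Nat.add_mul_mod_self_left, Nat.mod_eq_of_lt hrs]⟩

theorem mod_two_mul_eq_zero_or_self_iff {m t : ℕ} (ht : 0 < t) (hm : 0 < m) :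
    (m % (2 * t) = 0 ∨ m % (2 * t) = t) ↔ ∃ j, m = t + t * j := by
  have hdiv := Nat.mod_add_div m (2 * t)
  constructor
  · rintro (h | h)
    · rcases hq : m / (2 * t) with _ | q
      · rw [h, hq] at hdiv; omega
      · exact ⟨2 * q + 1, by rw [← hdiv, h, hq]; ring⟩
    · exact ⟨2 * (m / (2 * t)), by linarith⟩
  · rintro ⟨j, rfl⟩
    obtain ⟨k, rfl | rfl⟩ := Nat.even_or_odd' j
    · right
      rw [show t + t * (2 * k) = t + 2 * t * k by ring, Nat.add_mul_mod_self_left,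
        Nat.mod_eq_of_lt (by omega)]
    · left
      rw [show t + t * (2 * k + 1) = 2 * t * (k + 1) by ring, Nat.mul_mod_right]

theorem mk_prod_one_add_X_pow_residues {R : Type*} [CommRing R] {t : ℕ} (ht : 2 ≤ t) (n : ℕ) :
    Ideal.Quotient.mk (Ideal.span {X ^ (n + 1)})
      (∏ m ∈ (Icc 1 n).filter (fun m => m % (2 * t) = 0 ∨ m % (2 * t) = t - 1 ∨
          m % (2 * t) = t ∨ m % (2 * t) = t + 1), (1 + (X : R⟦X⟧) ^ m)) =
      Ideal.Quotient.mk (Ideal.span {X ^ (n + 1)}) (qPochNeg (X ^ t) (n + 1) *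
        (∏ j ∈ range (n + 1), (1 + X ^ (t - 1) * ((X ^ t) ^ 2) ^ j)) *
        ∏ j ∈ range (n + 1), (1 + X ^ (t + 1) * ((X ^ t) ^ 2) ^ j)) := by
  have hsplit : (Icc 1 n).filter (fun m => m % (2 * t) = 0 ∨ m % (2 * t) = t - 1 ∨
      m % (2 * t) = t ∨ m % (2 * t) = t + 1) =
      ((Icc 1 n).filter (fun m => m % (2 * t) = 0 ∨ m % (2 * t) = t) ∪
        (Icc 1 n).filter (fun m => m % (2 * t) = t - 1)) ∪
        (Icc 1 n).filter (fun m => m % (2 * t) = t + 1) := by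
    ext m
    simp only [mem_filter, mem_union]
    tauto
  have hX2 : ((X : R⟦X⟧) ^ t) ^ 2 = X ^ (2 * t) := by rw [← pow_mul, mul_comm]
  have hJ : ∀ r, n < r + 2 * t * (n + 1) := fun r => by nlinarith
  have h₀ : Ideal.Quotient.mk (Ideal.span {X ^ (n + 1)}) (qPochNeg ((X : R⟦X⟧) ^ t) (n + 1)) =
      Ideal.Quotient.mk _
        (∏ m ∈ Icc 1 n with m % (2 * t) = 0 ∨ m % (2 * t) = t, (1 + X ^ m)) := by
    simp only [qPochNeg, pow_succ']
    exact mk_prod_one_add_progression _ (by omega) (by omega) (by nlinarith)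
      fun m hm => mod_two_mul_eq_zero_or_self_iff (by omega) hm
  have h₁ : ∀ r, r < 2 * t → 0 < r → Ideal.Quotient.mk (Ideal.span {X ^ (n + 1)})
      (∏ j ∈ range (n + 1), (1 + (X : R⟦X⟧) ^ r * ((X ^ t) ^ 2) ^ j)) =
      Ideal.Quotient.mk _ (∏ m ∈ Icc 1 n with m % (2 * t) = r, (1 + X ^ m)) :=
    fun r hr hr0 => by
    rw [hX2]
    exact mk_prod_one_add_progression _ hr0 (by omega) (hJ r)
      fun m _ => mod_eq_iff_exists_eq_add_mul hr
  rw [hsplit, prod_union (disjoint_union_left.2 ⟨disjoint_filter.2 fun m _ h h' => by omega,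
      disjoint_filter.2 fun m _ h h' => by omega⟩),
    prod_union (disjoint_filter.2 fun m _ h h' => by omega), map_mul, map_mul, map_mul, map_mul,
    h₀, h₁ (t - 1) (by omega) (by omega), h₁ (t + 1) (by omega) (by omega)]

theorem capExp_eq {t : ℕ} (ht : 1 ≤ t) (a b c d : ℕ) :
    capExp t a b c d = (t - 1) * (a + c) + (t + 1) * (a + d) +
      t * (2 * (a + c).choose 2 + 2 * (a + d).choose 2 + c * d + (2 * a + c + d + 1) * b +
        b.choose 2) := by
  have htri : b * (b + 1) / 2 = (b + 1).choose 2 := by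
    rw [Nat.choose_two_right, Nat.add_sub_cancel, mul_comm]
  have h : 2 * t * a ^ 2 + t * (b * (b + 1) / 2) + t * c ^ 2 + t * d ^ 2 +
      2 * t * a * b + 2 * t * a * c + 2 * t * a * d + t * b * c + t * b * d + t * c * d + d =
      (t - 1) * (a + c) + (t + 1) * (a + d) +
        t * (2 * (a + c).choose 2 + 2 * (a + d).choose 2 + c * d + (2 * a + c + d + 1) * b +
          b.choose 2) + c := by
    rw [htri]
    qify [ht]
    push_cast [Nat.cast_choose_two]
    ring
  rw [capExp, h, Nat.add_sub_cancel]

/-- The analytical identity of Rogers–Ramanujan type for the mod-`t` generalization of the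
first Capparelli identity:
`∏_{n ≡ 0, t-1, t, t+1 (mod 2t)} (1 + q^n)
  = Σ_{a,b,c,d ≥ 0} q^{Q_t(a,b,c,d) + (t/2)b - c + d} /
      ((q^{2t};q^{2t})_a (q^t;q^t)_b (q^t;q^t)_c (q^t;q^t)_d)`,
stated coefficientwise as an identity of formal power series in `q` (factors and summands
of order greater than `n` do not affect the coefficient of `q^n`). -/
theorem stmt_9 (t : ℕ) (ht : 3 < t) :
    ∀ n : ℕ,
      (PowerSeries.coeff (R := ℚ) n)
        (∏ m ∈ (Finset.Icc 1 n).filter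
            (fun m => m % (2 * t) = 0 ∨ m % (2 * t) = t - 1 ∨
                      m % (2 * t) = t ∨ m % (2 * t) = t + 1),
          (1 + (PowerSeries.X : PowerSeries ℚ) ^ m)) =
      (PowerSeries.coeff (R := ℚ) n)
        (∑ a ∈ Finset.range (n + 1), ∑ b ∈ Finset.range (n + 1),
         ∑ c ∈ Finset.range (n + 1), ∑ d ∈ Finset.range (n + 1),
          (PowerSeries.X : PowerSeries ℚ) ^ (capExp t a b c d) *
            (∏ i ∈ Finset.range a, (1 - (PowerSeries.X : PowerSeries ℚ) ^ (2 * t * (i + 1))))⁻¹ *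
            (∏ i ∈ Finset.range b, (1 - (PowerSeries.X : PowerSeries ℚ) ^ (t * (i + 1))))⁻¹ *
            (∏ i ∈ Finset.range c, (1 - (PowerSeries.X : PowerSeries ℚ) ^ (t * (i + 1))))⁻¹ *
            (∏ i ∈ Finset.range d, (1 - (PowerSeries.X : PowerSeries ℚ) ^ (t * (i + 1))))⁻¹) := by
  intro n
  have hmem : ∀ r, 0 < r → ((X : ℚ⟦X⟧) ^ r) ^ (n + 1) ∈ Ideal.span {X ^ (n + 1)} :=
    fun r hr => by rw [← pow_mul]; exact X_pow_mem_span_X_pow (Nat.le_mul_of_pos_left _ hr)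
  apply coeff_eq_of_mk_span_X_pow_eq
  rw [mk_prod_one_add_X_pow_residues (by omega), ← mk_capparelliSum _
    (by simp [show t ≠ 0 by omega]) (hmem t (by omega)) (hmem _ (by omega)) (hmem _ (by omega))]
  refine congrArg _ ?_
  have hX2 : ((X : ℚ⟦X⟧) ^ t) ^ 2 = X ^ (2 * t) := by rw [← pow_mul, mul_comm]
  simp only [capparelliSum, hX2, qPoch_X_pow]
  refine sum_congr rfl fun a _ => sum_congr rfl fun b _ => sum_congr rfl fun c _ =>
    sum_congr rfl fun d _ => ?_
  rw [capExp_eq (by omega), pow_add (X : ℚ⟦X⟧) _ (t * _),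
    pow_add (X : ℚ⟦X⟧) ((t - 1) * _), pow_mul X (t - 1), pow_mul X (t + 1), pow_mul X t]
end

section
/- The insertion algorithm of Step 7 terminates with a well-defined string: given a string S_0 = (b̄'_1, ..., b̄'_k, ā'_1, ..., ā'_p) where b̄'_1 > b̄'_2 > ... > b̄'_k are positive integers, repeatedly moving each b̄'_i (for i = 1, ..., k in order) to the rightmost position such that all elements to its left are strictly larger than it yields a final string S_f in which the subsequence of the elements b̄'_1, ..., b̄'_k appears in decreasing order and each b̄'_j has only strictly larger elements to its left. -/
/-!
`b.foldr insRight a` inserts the `b̄'_i` from the smallest to the largest. Inserting `z` puts it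
directly before the first entry `≤ z`, so it lands in front of every previously inserted (smaller)
`b̄'_j`, which keeps their order; and an entry `x < z` all of whose left neighbours exceed it still
has only larger entries to its left afterwards, since the only new one is `z`.
-/

/-- Insertion of `x` into `l` at the rightmost position such that every element to the
left of `x` is strictly larger than `x`. -/
def insRight (x : ℤ) (l : List ℤ) : List ℤ :=
  l.takeWhile (fun y => decide (x < y)) ++ x :: l.dropWhile (fun y => decide (x < y))

def OnlyLargerBefore (x : ℤ) (l : List ℤ) : Prop :=
  ∃ pre post : List ℤ, l = pre ++ x :: post ∧ ∀ y ∈ pre, x < y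

@[simp]
lemma insRight_nil (x : ℤ) : insRight x [] = [x] := rfl

lemma insRight_cons_of_lt {x c : ℤ} (l : List ℤ) (h : x < c) :
    insRight x (c :: l) = c :: insRight x l := by
  simp [insRight, h]

lemma insRight_cons_of_not_lt {x c : ℤ} (l : List ℤ) (h : ¬ x < c) :
    insRight x (c :: l) = x :: c :: l := by
  simp [insRight, h]

lemma insRight_perm (x : ℤ) (l : List ℤ) : (insRight x l).Perm (x :: l) := by
  have h := List.perm_middle (a := x) (l₁ := l.takeWhile (fun y => decide (x < y)))
    (l₂ := l.dropWhile (fun y => decide (x < y)))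
  rwa [List.takeWhile_append_dropWhile] at h

lemma onlyLargerBefore_insRight_self (x : ℤ) (l : List ℤ) : OnlyLargerBefore x (insRight x l) :=
  ⟨_, _, rfl, fun _ hy => by simpa using List.mem_takeWhile_imp hy⟩

lemma cons_sublist_insRight {x : ℤ} {l' : List ℤ} (hle : ∀ y ∈ l', ¬ x < y) :
    ∀ {l : List ℤ}, l'.Sublist l → (x :: l').Sublist (insRight x l)
  | [], hs => by simp [List.sublist_nil.mp hs]
  | c :: t, hs => by
    by_cases hc : x < c
    · rw [insRight_cons_of_lt t hc]
      have hst : l'.Sublist t := by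
        cases hs with
        | cons _ hs => exact hs
        | cons_cons _ _ => exact absurd hc (hle c List.mem_cons_self)
      exact (cons_sublist_insRight hle hst).cons c
    · rw [insRight_cons_of_not_lt t hc]
      exact hs.cons_cons x

lemma OnlyLargerBefore.insRight {x z : ℤ} (hxz : x < z) :
    ∀ {l : List ℤ}, OnlyLargerBefore x l → OnlyLargerBefore x (insRight z l)
  | _, ⟨[], post, rfl, _⟩ =>
    ⟨[z], post, insRight_cons_of_not_lt post (not_lt.2 hxz.le), by simpa using hxz⟩
  | _, ⟨c :: pre, post, rfl, hpre⟩ => by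
    by_cases hzc : z < c
    · obtain ⟨pre', post', he, hpre'⟩ :=
        OnlyLargerBefore.insRight hxz ⟨pre, post, rfl, fun y hy => hpre y (.tail _ hy)⟩
      refine ⟨c :: pre', post', ?_, ?_⟩
      · rw [List.cons_append, insRight_cons_of_lt _ hzc, he, List.cons_append]
      · exact List.forall_mem_cons.2 ⟨hpre c List.mem_cons_self, hpre'⟩
    · exact ⟨z :: c :: pre, post, insRight_cons_of_not_lt _ hzc,
        List.forall_mem_cons.2 ⟨hxz, hpre⟩⟩

lemma perm_foldr_insRight (a : List ℤ) : ∀ b : List ℤ, (b ++ a).Perm (b.foldr insRight a)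
  | [] => List.Perm.refl a
  | z :: b => ((perm_foldr_insRight a b).cons z).trans (insRight_perm _ _).symm

lemma sublist_foldr_insRight (a : List ℤ) :
    ∀ {b : List ℤ}, b.Pairwise (· > ·) → b.Sublist (b.foldr insRight a)
  | [], _ => List.nil_sublist _
  | _ :: _, hb =>
    have ⟨hlt, hb⟩ := List.pairwise_cons.mp hb
    cons_sublist_insRight (fun y hy => not_lt.2 (hlt y hy).le) (sublist_foldr_insRight a hb)

lemma onlyLargerBefore_foldr_insRight (a : List ℤ) :
    ∀ {b : List ℤ}, b.Pairwise (· > ·) → ∀ x ∈ b, OnlyLargerBefore x (b.foldr insRight a)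
  | z :: b, hb, x, hx => by
    obtain ⟨hlt, hb⟩ := List.pairwise_cons.mp hb
    rcases List.mem_cons.mp hx with rfl | hx
    · exact onlyLargerBefore_insRight_self x _
    · exact (onlyLargerBefore_foldr_insRight a hb x hx).insRight (hlt x hx)

theorem stmt_17_general (b a : List ℤ) (hb : b.Chain' (· > ·)) :
    (b ++ a).Perm (b.foldr insRight a) ∧
    b.Sublist (b.foldr insRight a) ∧
    ∀ x ∈ b, ∃ pre post : List ℤ,
      b.foldr insRight a = pre ++ x :: post ∧ ∀ y ∈ pre, x < y := by
  have hpw : b.Pairwise (· > ·) := List.isChain_iff_pairwise.mp hb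
  exact ⟨perm_foldr_insRight a b, sublist_foldr_insRight a hpw,
    onlyLargerBefore_foldr_insRight a hpw⟩

/-- Step 7 of the bijection terminates with a well-defined string: starting from
`S₀ = (b̄'_1, …, b̄'_k, ā'_1, …, ā'_p)` with `b̄'_1 > … > b̄'_k` positive, and moving each
`b̄'_i` (deepest first, as in the paper's example) to the rightmost position at which all
elements to its left are strictly larger, one obtains a final string `S_f` which is a
rearrangement of `S₀`, in which the elements `b̄'_1, …, b̄'_k` appear (in this decreasing
order) as a subsequence, and each `b̄'_j` occurs with only strictly larger elements to
its left. -/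
theorem stmt_17 (b a : List ℤ) (hb : b.Chain' (· > ·)) (hbpos : ∀ x ∈ b, 0 < x) :
    (b ++ a).Perm (b.foldr insRight a) ∧
    b.Sublist (b.foldr insRight a) ∧
    ∀ x ∈ b, ∃ pre post : List ℤ,
      b.foldr insRight a = pre ++ x :: post ∧ ∀ y ∈ pre, x < y :=
  stmt_17_general b a hb
end
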